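/- arXiv:2202.12372 — 4 statements merged into one kernel-verified Lean document; each statement's English description precedes it below -/
import Mathlib

section
/- Let m ≥ 2 be an integer and Q(z) = (1+z)^{2+2m}/(z(1−z)^{2m}). Then for all z ∈ ℂ∖{0,1}: Q(z) = z + (4m+2) + (8m(m+1)+1)/z + Q₂(z), where Q₂(z) = (8·C(2m,3) + 16m)/(z(z−1)) + Σ_{j=4}^{2m} C(2m,j)·2^j/(z(z−1)^{j−2}) + Σ_{j=2}^{2m} 4·C(2m,j)·2^j/(z−1)^j. Moreover, for every real r > 1 and every z with |z| ≥ r, |Q₂(z)| ≤ Q_{2,max}(r) := (8·C(2m,3) + 16m)/(r(r−1)) + (2·(2m)(2m−1)(2m−2)(2m−3))/(3r(r−1)²)·((r+1)/(r−1))^{2m−4} + (8·(2m)(2m−1))/(r−1)²·((r+1)/(r−1))^{2m−2}. -/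
/-!
With `c = 2 / (z - 1)` one has `(1 + z) / (z - 1) = 1 + c`, so
`Q(z) = (1 + z)² / z · (1 + c)^(2m)`. Expanding `(1 + c)^(2m)` binomially, the terms `j ≤ 3`
produce `z + (4m + 2) + (8m(m+1) + 1)/z` and the first summand of `Q₂`, and what is left are
the binomial tails `∑_{j ≥ s} C(2m, j) c^j` for `s = 2, 4`. Since
`C(n, j) ≤ C(n, s) C(n - s, j - s)`, such a tail is at most `C(n, s) |c|^s (1 + |c|)^(n - s)`,
and `|c| ≤ 2 / (r - 1)` when `|z| ≥ r`.
-/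

open Finset

def binomialTail {R : Type*} [CommSemiring R] (n s : ℕ) (c : R) : R :=
  ∑ j ∈ Icc s n, (n.choose j : R) * c ^ j

theorem Nat.choose_le_choose_mul_choose_sub (n : ℕ) {s j : ℕ} (hsj : s ≤ j) :
    n.choose j ≤ n.choose s * (n - s).choose (j - s) :=
  (Nat.le_mul_of_pos_right _ (Nat.choose_pos hsj)).trans_eq (Nat.choose_mul hsj)

theorem binomialTail_le {n s : ℕ} (hsn : s ≤ n) {x : ℝ} (hx : 0 ≤ x) :
    binomialTail n s x ≤ n.choose s * x ^ s * (1 + x) ^ (n - s) := by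
  rw [binomialTail, ← Ico_add_one_right_eq_Icc, sum_Ico_eq_sum_range,
    show n + 1 - s = n - s + 1 by omega, add_comm 1 x, add_pow, mul_sum]
  refine sum_le_sum fun k _ => ?_
  have hchoose : (n.choose (s + k) : ℝ) ≤ n.choose s * (n - s).choose k := by
    exact_mod_cast (Nat.choose_le_choose_mul_choose_sub n (Nat.le_add_right s k)).trans_eq
      (by rw [Nat.add_sub_cancel_left])
  calc (n.choose (s + k) : ℝ) * x ^ (s + k)
      ≤ n.choose s * (n - s).choose k * x ^ (s + k) := by gcongr
    _ = _ := by ring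

theorem norm_binomialTail_le {𝕜 : Type*} [RCLike 𝕜] {n s : ℕ} (hsn : s ≤ n) (c : 𝕜) :
    ‖binomialTail n s c‖ ≤ n.choose s * ‖c‖ ^ s * (1 + ‖c‖) ^ (n - s) :=
  (norm_sum_le _ _).trans <| by
    simpa only [binomialTail, norm_mul, norm_pow, RCLike.norm_natCast] using
      binomialTail_le hsn (norm_nonneg c)

theorem norm_pow_mul_norm_binomialTail_two_div_le {𝕜 : Type*} [RCLike 𝕜] {n s : ℕ}
    (hsn : s ≤ n) {ρ : ℝ} (hρ : 0 < ρ) {w : 𝕜} (hw : ρ ≤ ‖w‖) :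
    ‖w‖ ^ s * ‖binomialTail n s (2 / w)‖ ≤ n.choose s * 2 ^ s * (1 + 2 / ρ) ^ (n - s) := by
  have hw0 : 0 < ‖w‖ := hρ.trans_le hw
  have h2w : ‖(2 : 𝕜) / w‖ = 2 / ‖w‖ := by rw [norm_div, RCLike.norm_ofNat]
  calc ‖w‖ ^ s * ‖binomialTail n s (2 / w)‖
      ≤ ‖w‖ ^ s * (n.choose s * (2 / ‖w‖) ^ s * (1 + 2 / ‖w‖) ^ (n - s)) := by
        rw [← h2w]; gcongr; exact norm_binomialTail_le hsn _
    _ = n.choose s * 2 ^ s * (1 + 2 / ‖w‖) ^ (n - s) := by rw [div_pow]; field_simp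
    _ ≤ n.choose s * 2 ^ s * (1 + 2 / ρ) ^ (n - s) := by gcongr

theorem one_add_pow_eq_sum_range_add_binomialTail {R : Type*} [CommSemiring R] (c : R) {n k : ℕ}
    (hk : k ≤ n + 1) :
    (1 + c) ^ n = ∑ j ∈ range k, (n.choose j : R) * c ^ j + binomialTail n k c := by
  rw [binomialTail, ← Ico_add_one_right_eq_Icc, sum_range_add_sum_Ico _ hk, add_comm, add_pow]
  simp only [one_pow, mul_one, mul_comm]

theorem one_add_pow_two_add_div_mul_one_sub_pow {K : Type*} [Field K] {n : ℕ} (hn : Even n)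
    {z : K} (hz : z ≠ 1) :
    (1 + z) ^ (2 + n) / (z * (1 - z) ^ n) = (1 + z) ^ 2 / z * (1 + 2 / (z - 1)) ^ n := by
  have hw : z - 1 ≠ 0 := sub_ne_zero.2 hz
  rw [← neg_sub z, hn.neg_pow, show 1 + 2 / (z - 1) = (1 + z) / (z - 1) by field_simp; ring,
    div_pow, pow_add]
  ring

theorem sum_Icc_mul_two_pow_div_mul_pow_sub_two {K : Type*} [Field K] (a : ℕ → K) {s n : ℕ}
    (hs : 2 ≤ s) {z : K} (hz : z ≠ 1) :
    ∑ j ∈ Icc s n, a j * 2 ^ j / (z * (z - 1) ^ (j - 2)) =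
      (z - 1) ^ 2 / z * ∑ j ∈ Icc s n, a j * (2 / (z - 1)) ^ j := by
  have hw : z - 1 ≠ 0 := sub_ne_zero.2 hz
  rw [mul_sum]
  refine sum_congr rfl fun j hj => ?_
  obtain ⟨i, rfl⟩ := Nat.exists_eq_add_of_le' ((mem_Icc.1 hj).1.trans' hs)
  rw [Nat.add_sub_cancel, div_pow]
  field_simp
  ring

theorem one_add_sq_div_mul_expansion {K : Type*} [Field K] (m C₃ S : K) {z : K} (hz0 : z ≠ 0)
    (hz1 : z ≠ 1) :
    (1 + z) ^ 2 / z * (1 + 2 * m * (2 / (z - 1)) + m * (2 * m - 1) * (2 / (z - 1)) ^ 2 +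
        C₃ * (2 / (z - 1)) ^ 3 + S) =
      z + (4 * m + 2) + (8 * m * (m + 1) + 1) / z +
        ((8 * C₃ + 16 * m) / (z * (z - 1)) + (z - 1) ^ 2 / z * S +
          4 * (m * (2 * m - 1) * (2 / (z - 1)) ^ 2 + C₃ * (2 / (z - 1)) ^ 3 + S)) := by
  have hw : z - 1 ≠ 0 := sub_ne_zero.2 hz1
  field_simp
  ring

theorem norm_remainder_le {m : ℕ} (hm : 2 ≤ m) {r : ℝ} (hr : 1 < r) {z : ℂ} (hz : r ≤ ‖z‖) :
    ‖(8 * ((2 * m).choose 3 : ℂ) + 16 * (m : ℂ)) / (z * (z - 1)) +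
        (z - 1) ^ 2 / z * binomialTail (2 * m) 4 (2 / (z - 1)) +
        4 * binomialTail (2 * m) 2 (2 / (z - 1))‖ ≤
      (8 * ((2 * m).choose 3 : ℝ) + 16 * (m : ℝ)) / (r * (r - 1)) +
      2 * (2 * (m : ℝ)) * (2 * (m : ℝ) - 1) * (2 * (m : ℝ) - 2) * (2 * (m : ℝ) - 3) /
          (3 * r * (r - 1) ^ 2) * ((r + 1) / (r - 1)) ^ (2 * m - 4) +
      8 * (2 * (m : ℝ)) * (2 * (m : ℝ) - 1) / ((r - 1) ^ 2) *
          ((r + 1) / (r - 1)) ^ (2 * m - 2) := by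
  have hr1 : 0 < r - 1 := sub_pos.2 hr
  have hz0 : 0 < ‖z‖ := by linarith
  have hw : r - 1 ≤ ‖z - 1‖ := by
    have := norm_sub_norm_le z 1
    rw [norm_one] at this
    linarith
  have hw0 : 0 < ‖z - 1‖ := hr1.trans_le hw
  have hratio : 1 + 2 / (r - 1) = (r + 1) / (r - 1) := by field_simp; ring
  have htail := fun s (hs : s ≤ 2 * m) =>
    hratio ▸ norm_pow_mul_norm_binomialTail_two_div_le hs hr1 hw
  have hC4 : ((2 * m).choose 4 : ℝ) = 2 * m * (2 * m - 1) * (2 * m - 2) * (2 * m - 3) / 24 := by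
    rw [Nat.cast_choose_eq_descPochhammer_div]
    simp [descPochhammer_succ_right, Nat.factorial]
  have hC2 : ((2 * m).choose 2 : ℝ) = 2 * m * (2 * m - 1) / 2 := by
    rw [Nat.cast_choose_two]; push_cast; ring
  refine norm_add₃_le.trans (add_le_add_three ?_ ?_ ?_)
  · rw [norm_div, norm_mul, show (8 * ((2 * m).choose 3 : ℂ) + 16 * (m : ℂ)) =
      ((8 * ((2 * m).choose 3 : ℝ) + 16 * (m : ℝ) : ℝ) : ℂ) by push_cast; rfl,
      Complex.norm_of_nonneg (by positivity)]
    gcongr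
  · calc ‖(z - 1) ^ 2 / z * binomialTail (2 * m) 4 (2 / (z - 1))‖
        = ‖z - 1‖ ^ 4 * ‖binomialTail (2 * m) 4 (2 / (z - 1))‖ / (‖z‖ * ‖z - 1‖ ^ 2) := by
          rw [norm_mul, norm_div, norm_pow]; field_simp
      _ ≤ (2 * m).choose 4 * 2 ^ 4 * ((r + 1) / (r - 1)) ^ (2 * m - 4) / (r * (r - 1) ^ 2) := by
          exact div_le_div₀ (by positivity) (htail 4 (by omega)) (by positivity) (by gcongr)
      _ = _ := by rw [hC4]; field_simp; ring
  · calc ‖4 * binomialTail (2 * m) 2 (2 / (z - 1))‖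
        = 4 * (‖z - 1‖ ^ 2 * ‖binomialTail (2 * m) 2 (2 / (z - 1))‖) / ‖z - 1‖ ^ 2 := by
          rw [norm_mul, RCLike.norm_ofNat]; field_simp
      _ ≤ 4 * ((2 * m).choose 2 * 2 ^ 2 * ((r + 1) / (r - 1)) ^ (2 * m - 2)) / (r - 1) ^ 2 := by
          exact div_le_div₀ (by positivity)
            (mul_le_mul_of_nonneg_left (htail 2 (by omega)) (by norm_num)) (by positivity)
            (by gcongr)
      _ = _ := by rw [hC2]; field_simp; ring

/-- expansion `Q(z) = z + (4m+2) + (8m(m+1)+1)/z + Q₂(z)` with the explicit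
remainder `Q₂`, together with the bound `|Q₂(z)| ≤ Q_{2,max}(r)` for `|z| ≥ r > 1`. -/
theorem stmt_3 (m : ℕ) (hm : 2 ≤ m)
    (Q Q2 : ℂ → ℂ)
    (hQ : ∀ z : ℂ, Q z = (1 + z) ^ (2 + 2 * m) / (z * (1 - z) ^ (2 * m)))
    (hQ2 : ∀ z : ℂ, Q2 z =
      (8 * ((2 * m).choose 3 : ℂ) + 16 * (m : ℂ)) / (z * (z - 1)) +
      ∑ j ∈ Finset.Icc 4 (2 * m), ((2 * m).choose j : ℂ) * 2 ^ j / (z * (z - 1) ^ (j - 2)) +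
      ∑ j ∈ Finset.Icc 2 (2 * m), 4 * ((2 * m).choose j : ℂ) * 2 ^ j / ((z - 1) ^ j))
    (Q2max : ℝ → ℝ)
    (hQ2max : ∀ r : ℝ, Q2max r =
      (8 * ((2 * m).choose 3 : ℝ) + 16 * (m : ℝ)) / (r * (r - 1)) +
      2 * (2 * (m : ℝ)) * (2 * (m : ℝ) - 1) * (2 * (m : ℝ) - 2) * (2 * (m : ℝ) - 3) /
          (3 * r * (r - 1) ^ 2) * ((r + 1) / (r - 1)) ^ (2 * m - 4) +
      8 * (2 * (m : ℝ)) * (2 * (m : ℝ) - 1) / ((r - 1) ^ 2) *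
          ((r + 1) / (r - 1)) ^ (2 * m - 2)) :
    (∀ z : ℂ, z ≠ 0 → z ≠ 1 →
      Q z = z + (4 * (m : ℂ) + 2) + (8 * (m : ℂ) * ((m : ℂ) + 1) + 1) / z + Q2 z) ∧
    (∀ r : ℝ, 1 < r → ∀ z : ℂ, r ≤ ‖z‖ → ‖Q2 z‖ ≤ Q2max r) := by
  have hQ2_eq : ∀ z : ℂ, z ≠ 1 → Q2 z =
      (8 * ((2 * m).choose 3 : ℂ) + 16 * (m : ℂ)) / (z * (z - 1)) +
        (z - 1) ^ 2 / z * binomialTail (2 * m) 4 (2 / (z - 1)) +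
        4 * binomialTail (2 * m) 2 (2 / (z - 1)) := by
    intro z hz
    rw [hQ2, sum_Icc_mul_two_pow_div_mul_pow_sub_two _ (by norm_num : 2 ≤ 4) hz, binomialTail,
      binomialTail]
    simp only [div_pow, mul_assoc, mul_div_assoc, mul_sum]
  refine ⟨fun z hz0 hz1 => ?_, fun r hr z hz => ?_⟩
  · have hC2 : ((2 * m).choose 2 : ℂ) = m * (2 * m - 1) := by
      rw [Nat.cast_choose_two]; push_cast; ring
    have h2 := one_add_pow_eq_sum_range_add_binomialTail (2 / (z - 1)) (n := 2 * m) (k := 2)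
      (by omega)
    have h4 := one_add_pow_eq_sum_range_add_binomialTail (2 / (z - 1)) (n := 2 * m) (k := 4)
      (by omega)
    simp only [sum_range_succ, sum_range_zero, Nat.choose_zero_right, Nat.choose_one_right, hC2,
      Nat.cast_one, Nat.cast_mul, Nat.cast_ofNat, pow_zero, pow_one, mul_one, zero_add] at h2 h4
    have hS2 : binomialTail (2 * m) 2 (2 / (z - 1)) = m * (2 * m - 1) * (2 / (z - 1)) ^ 2 +
        (2 * m).choose 3 * (2 / (z - 1)) ^ 3 + binomialTail (2 * m) 4 (2 / (z - 1)) := by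
      linear_combination h4 - h2
    rw [hQ, one_add_pow_two_add_div_mul_one_sub_pow (even_two_mul m) hz1, hQ2_eq z hz1, h4, hS2]
    exact one_add_sq_div_mul_expansion _ _ _ hz0 hz1
  · have hz1 : z ≠ 1 := by rintro rfl; simp at hz; linarith
    rw [hQ2_eq z hz1, hQ2max]
    exact norm_remainder_le hm hr hz
end

section
/- Let m ≥ 2 be an integer and Q(z) = (1+z)^{2+2m}/(z(1−z)^{2m}). If |z| > (√(m+1)+√m)², then Re Q′(z) > 0. Consequently, for every θ ∈ ℝ, Q is injective on the half-plane {z ∈ ℂ : Re(z·e^{−iθ}) > (√(m+1)+√m)²}. -/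
/-!
Put `x = z⁻¹` and `N = 2m + 1`. A direct computation gives `Q'(z) = F(x)` with
`F(x) = (1 + x)^N (1 - 2Nx + x²) / (1 - x)^N`. Expanding `(1 - x)^(-2m)` as a negative binomial
series writes `1 - F(x)` as a series of polynomials in `x` with nonnegative coefficients, whence
`‖1 - F(x)‖ ≤ 1 - F(‖x‖)`. For `‖z‖ > (√(m+1) + √m)²` the number `‖x‖` lies below the smaller root
`(√(m+1) - √m)²` of `1 - 2Nt + t²`, so `F(‖x‖) > 0` and therefore `Re F(x) > 0`.
Injectivity on a half-plane follows, as for any function with `Re f' > 0` on a convex set, from the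
mean value theorem applied to `Re (f / (b - a))` along the segment `[a, b]`.
-/

open Finset Polynomial

theorem Polynomial.norm_aeval_le_aeval_norm {R : Type*} [SeminormedRing R] [NormOneClass R]
    (p : ℕ[X]) (x : R) : ‖aeval x p‖ ≤ aeval ‖x‖ p := by
  induction p using Polynomial.induction_on' with
  | add p q hp hq => simpa only [map_add] using (norm_add_le _ _).trans (add_le_add hp hq)
  | monomial k c =>
    simp only [aeval_monomial, eq_natCast]
    calc ‖(c : R) * x ^ k‖ ≤ ‖(c : R)‖ * ‖x ^ k‖ := norm_mul_le _ _
      _ ≤ c * ‖x‖ ^ k := by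
        gcongr
        · simpa using Nat.norm_cast_le (α := R) c
        · exact norm_pow_le x k

theorem sq_mul_sum_sum_one_add_pow {R : Type*} [CommRing R] (x : R) (N : ℕ) :
    x ^ 2 * ∑ j ∈ range N, ∑ i ∈ range (N - j), (1 + x) ^ (i + j) =
      1 + (1 + x) ^ N * (N * x - 1) := by
  have hgeom (M : ℕ) : x * ∑ i ∈ range M, (1 + x) ^ i = (1 + x) ^ M - 1 := by
    simpa [mul_comm] using geom_sum_mul (1 + x) M
  calc x ^ 2 * ∑ j ∈ range N, ∑ i ∈ range (N - j), (1 + x) ^ (i + j)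
      = x * ∑ j ∈ range N, (1 + x) ^ j * (x * ∑ i ∈ range (N - j), (1 + x) ^ i) := by
        simp only [mul_sum, pow_add]
        refine sum_congr rfl fun j _ => sum_congr rfl fun i _ => ?_
        ring
    _ = x * ∑ j ∈ range N, ((1 + x) ^ N - (1 + x) ^ j) := by
        refine congrArg _ (sum_congr rfl fun j hj => ?_)
        rw [hgeom, mul_sub, ← pow_add, Nat.add_sub_cancel' (mem_range.1 hj).le, mul_one]
    _ = 1 + (1 + x) ^ N * (N * x - 1) := by
        rw [sum_sub_distrib, mul_sub, hgeom]
        simp only [sum_const, card_range, nsmul_eq_mul]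
        ring

/-- `Q'(z) = qDerivInv (2 * m + 1) z⁻¹`, see `hasDerivAt_Q`. -/
def qDerivInv {𝕜 : Type*} [Field 𝕜] (N : ℕ) (x : 𝕜) : 𝕜 :=
  (1 + x) ^ N * (1 - 2 * N * x + x ^ 2) / (1 - x) ^ N

/-- Terms of a series for `1 - qDerivInv (n + 2)` (`hasSum_aeval_oneSubQDerivInvTerm`), written as
polynomials over `ℕ` so that `Polynomial.norm_aeval_le_aeval_norm` bounds each of them. -/
noncomputable def oneSubQDerivInvTerm (n : ℕ) : ℕ → ℕ[X]
  | 0 => X ^ 2 * ∑ j ∈ range (n + 2), ∑ i ∈ range (n + 2 - j), (1 + X) ^ (i + j)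
  | k + 1 => ((k + 1 + n).choose n : ℕ[X]) * X ^ (k + 1) *
      ((1 + X) ^ (n + 2) * ((k : ℕ[X]) * (1 + X) + ((n : ℕ[X]) + 3) * X))

section Series

variable {𝕜 : Type*} [NormedField 𝕜]

theorem hasSum_neg_qDerivInv (n : ℕ) {x : 𝕜} (hx : ‖x‖ < 1) :
    HasSum (fun k : ℕ => ((k + n).choose n : 𝕜) * x ^ k *
        ((1 + x) ^ (n + 2) * ((k - 1) * (1 + x) + (n + 3) * x)))
      (-qDerivInv (n + 2) x) := by
  have hx1 : 1 - x ≠ 0 := by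
    intro h
    rw [← eq_of_sub_eq_zero h, norm_one] at hx
    exact lt_irrefl 1 hx
  -- `k * C(k + n, n) = (n + 1) * C(k + n + 1, n + 1) - (n + 1) * C(k + n, n)` turns the series
  -- into a combination of two negative binomial series.
  have hsum := ((hasSum_choose_mul_geometric_of_norm_lt_one (n + 1) hx).mul_left
      ((n + 1) * (1 + x) ^ (n + 3))).add
    ((hasSum_choose_mul_geometric_of_norm_lt_one n hx).mul_left ((1 + x) ^ (n + 2) * (x - (n + 2))))
  have hval : (n + 1) * (1 + x) ^ (n + 3) * (1 / (1 - x) ^ (n + 1 + 1)) +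
      (1 + x) ^ (n + 2) * (x - (n + 2)) * (1 / (1 - x) ^ (n + 1)) = -qDerivInv (n + 2) x := by
    unfold qDerivInv
    field_simp
    push_cast
    ring
  rw [hval] at hsum
  refine hsum.congr_fun fun k => ?_
  have hchoose : ((k + n + 1 : ℕ) : 𝕜) * ((k + n).choose n : 𝕜)
      = ((k + (n + 1)).choose (n + 1) : 𝕜) * (n + 1) := by
    rw [← add_assoc]
    exact_mod_cast congrArg (Nat.cast : ℕ → 𝕜) (Nat.add_one_mul_choose_eq (k + n) n)
  push_cast at hchoose
  linear_combination (x ^ k * (1 + x) ^ (n + 2) * (1 + x)) * hchoose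

theorem hasSum_aeval_oneSubQDerivInvTerm (n : ℕ) {x : 𝕜} (hx : ‖x‖ < 1) :
    HasSum (fun k => aeval x (oneSubQDerivInvTerm n k)) (1 - qDerivInv (n + 2) x) := by
  rw [← hasSum_nat_add_iff' 1]
  have htail := (hasSum_nat_add_iff' (f := fun k : ℕ => ((k + n).choose n : 𝕜) * x ^ k *
      ((1 + x) ^ (n + 2) * ((k - 1) * (1 + x) + (n + 3) * x))) 1).2 (hasSum_neg_qDerivInv n hx)
  simp only [sum_range_one] at htail ⊢
  have hhead : aeval x (oneSubQDerivInvTerm n 0) =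
      1 + (1 + x) ^ (n + 2) * ((n + 2 : ℕ) * x - 1) := by
    simp only [oneSubQDerivInvTerm, map_mul, map_pow, aeval_X, map_sum, map_add, map_one]
    exact sq_mul_sum_sum_one_add_pow x (n + 2)
  rw [hhead]
  convert htail using 1
  · funext k
    simp only [oneSubQDerivInvTerm, map_mul, map_add, map_pow, map_natCast, map_one, map_ofNat,
      aeval_X]
    push_cast
    ring
  · simp only [zero_add, Nat.choose_self, Nat.cast_one, pow_zero, one_mul, Nat.cast_zero]
    push_cast
    ring

theorem norm_one_sub_qDerivInv_le (n : ℕ) {x : 𝕜} (hx : ‖x‖ < 1) :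
    ‖1 - qDerivInv (n + 2) x‖ ≤ 1 - qDerivInv (n + 2) ‖x‖ :=
  (hasSum_aeval_oneSubQDerivInvTerm n hx).norm_le_of_bounded
    (hasSum_aeval_oneSubQDerivInvTerm n (by rwa [norm_norm]))
    fun k => norm_aeval_le_aeval_norm _ _

end Series

theorem qDerivInv_pos (N : ℕ) {t : ℝ} (ht0 : 0 ≤ t) (ht1 : t < 1)
    (hq : 0 < 1 - 2 * N * t + t ^ 2) : 0 < qDerivInv N t := by
  unfold qDerivInv
  have : 0 < 1 - t := sub_pos.2 ht1
  positivity

theorem re_qDerivInv_inv_pos (n : ℕ) {z : ℂ} (hz : 1 < ‖z‖)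
    (hq : 0 < ‖z‖ ^ 2 - 2 * (n + 2 : ℕ) * ‖z‖ + 1) : 0 < (qDerivInv (n + 2) z⁻¹).re := by
  have hx : ‖z⁻¹‖ < 1 := by
    rw [norm_inv]
    exact inv_lt_one_of_one_lt₀ hz
  have hq' : 0 < 1 - 2 * (n + 2 : ℕ) * ‖z⁻¹‖ + ‖z⁻¹‖ ^ 2 := by
    have : 1 - 2 * (n + 2 : ℕ) * ‖z‖⁻¹ + ‖z‖⁻¹ ^ 2 =
        (‖z‖ ^ 2 - 2 * (n + 2 : ℕ) * ‖z‖ + 1) / ‖z‖ ^ 2 := by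
      field_simp
    rw [norm_inv, this]
    positivity
  have hpos := qDerivInv_pos (n + 2) (norm_nonneg _) hx hq'
  have hle := (Complex.re_le_norm _).trans (norm_one_sub_qDerivInv_le n hx)
  rw [Complex.sub_re, Complex.one_re] at hle
  linarith

section Derivative

variable {𝕜 : Type*} [NontriviallyNormedField 𝕜]

theorem hasDerivAt_one_add_pow_div (d : ℕ) {z : 𝕜} (hz0 : z ≠ 0) (hz1 : z ≠ 1) :
    HasDerivAt (fun w => (1 + w) ^ (d + 2) / (w * (1 - w) ^ d))
      ((1 + z) ^ (d + 1) * (2 * (d + 1) * z - z ^ 2 - 1) / (z ^ 2 * (1 - z) ^ (d + 1))) z := by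
  have h1z : 1 - z ≠ 0 := sub_ne_zero.2 (Ne.symm hz1)
  have hnum := ((hasDerivAt_id' z).const_add 1).fun_pow (d + 2)
  have hden := (hasDerivAt_id' z).fun_mul (((hasDerivAt_id' z).const_sub 1).fun_pow d)
  refine (hnum.div hden (mul_ne_zero hz0 (pow_ne_zero d h1z))).congr_deriv ?_
  -- `d - 1` is truncated, but the factor `d` vanishes when `d = 0`
  have hpred : (d : 𝕜) * (1 - z) ^ (d - 1) * (1 - z) = d * (1 - z) ^ d := by
    cases d with
    | zero => simp
    | succ d => simp [pow_succ, mul_assoc]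
  rw [show d + 2 - 1 = d + 1 by omega]
  field_simp
  push_cast
  linear_combination (1 + z) ^ (d + 2) * z * (1 - z) ^ d * hpred

theorem qDerivInv_inv {N : ℕ} (hN : Odd N) {z : 𝕜} (hz0 : z ≠ 0) :
    qDerivInv N z⁻¹ = (1 + z) ^ N * (2 * N * z - z ^ 2 - 1) / (z ^ 2 * (1 - z) ^ N) := by
  have hneg : (z - 1) ^ N = -(1 - z) ^ N := by rw [← hN.neg_pow, neg_sub]
  unfold qDerivInv
  rw [show 1 - z⁻¹ = (z - 1) / z by field_simp, show 1 + z⁻¹ = (1 + z) / z by field_simp; ring,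
    div_pow, div_pow, hneg]
  field_simp
  ring

theorem hasDerivAt_Q (m : ℕ) {z : 𝕜} (hz0 : z ≠ 0) (hz1 : z ≠ 1) :
    HasDerivAt (fun w => (1 + w) ^ (2 + 2 * m) / (w * (1 - w) ^ (2 * m)))
      (qDerivInv (2 * m + 1) z⁻¹) z := by
  rw [qDerivInv_inv (odd_two_mul_add_one m) hz0, add_comm 2]
  convert hasDerivAt_one_add_pow_div (2 * m) hz0 hz1 using 2
  push_cast
  ring

end Derivative

theorem one_le_sqrt_add_sqrt_sq (m : ℕ) : 1 ≤ (√((m : ℝ) + 1) + √(m : ℝ)) ^ 2 := by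
  have h1 : 1 ≤ √((m : ℝ) + 1) := Real.one_le_sqrt.2 (by linarith [m.cast_nonneg (α := ℝ)])
  nlinarith [Real.sqrt_nonneg (m : ℝ)]

theorem sq_sub_mul_add_one_pos_of_sqrt_add_sqrt_sq_lt (m : ℕ) {r : ℝ}
    (hr : (√((m : ℝ) + 1) + √(m : ℝ)) ^ 2 < r) : 0 < r ^ 2 - 2 * (2 * m + 1) * r + 1 := by
  set a := √((m : ℝ) + 1)
  set b := √(m : ℝ)
  have ha : a ^ 2 = m + 1 := Real.sq_sqrt (by positivity)
  have hb : b ^ 2 = m := Real.sq_sqrt (by positivity)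
  have hab : (a - b) ^ 2 ≤ (a + b) ^ 2 := by
    nlinarith [Real.sqrt_nonneg ((m : ℝ) + 1), Real.sqrt_nonneg (m : ℝ)]
  have hfactor : r ^ 2 - 2 * (2 * m + 1) * r + 1 = (r - (a + b) ^ 2) * (r - (a - b) ^ 2) := by
    linear_combination (2 * r - (a ^ 2 - b ^ 2 + 1)) * ha + (2 * r + (a ^ 2 - b ^ 2 + 1)) * hb
  rw [hfactor]
  exact mul_pos (sub_pos.2 hr) (sub_pos.2 (hab.trans_lt hr))

theorem Convex.injOn_of_re_deriv_pos {f : ℂ → ℂ} {s : Set ℂ} (hs : Convex ℝ s)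
    (hf : ∀ z ∈ s, DifferentiableAt ℂ f z) (hf' : ∀ z ∈ s, 0 < (deriv f z).re) : s.InjOn f := by
  intro a ha b hb hab
  by_contra hne
  have hw : b - a ≠ 0 := sub_ne_zero.2 (Ne.symm hne)
  have hseg : ∀ t ∈ Set.Icc (0 : ℝ) 1, a + t • (b - a) ∈ s :=
    fun t ht => hs.add_smul_sub_mem ha hb ht
  have hφ : ∀ t ∈ Set.Icc (0 : ℝ) 1, HasDerivAt (fun u : ℝ => (f (a + u • (b - a)) / (b - a)).re)
      (deriv f (a + t • (b - a))).re t := by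
    intro t ht
    have hγ : HasDerivAt (fun u : ℝ => a + u • (b - a)) (b - a) t := by
      simpa using ((hasDerivAt_id t).smul_const (b - a)).const_add a
    have hcomp := ((hf _ (hseg t ht)).hasDerivAt.comp t hγ).div_const (b - a)
    rw [mul_div_cancel_right₀ _ hw] at hcomp
    exact Complex.reCLM.hasFDerivAt.comp_hasDerivAt t hcomp
  obtain ⟨c, hc, hslope⟩ := exists_hasDerivAt_eq_slope _ _ zero_lt_one
    (fun t ht => (hφ t ht).continuousAt.continuousWithinAt)
    (fun t ht => hφ t (Set.Ioo_subset_Icc_self ht))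
  have hc' := hf' _ (hseg c (Set.Ioo_subset_Icc_self hc))
  simp only [one_smul, zero_smul, add_zero, add_sub_cancel, hab, sub_self, zero_div] at hslope
  exact hc'.ne' hslope

theorem convex_setOf_lt_re_mul (c : ℂ) (r : ℝ) : Convex ℝ {z : ℂ | r < (z * c).re} :=
  convex_halfSpace_gt
    ⟨fun x y => by simp [add_mul], fun t x => by simp [Complex.real_smul, mul_assoc]⟩ r

theorem lt_norm_of_lt_re_mul_exp {r θ : ℝ} {z : ℂ}
    (h : r < (z * Complex.exp (-(θ : ℂ) * Complex.I)).re) : r < ‖z‖ := by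
  have hexp : ‖Complex.exp (-(θ : ℂ) * Complex.I)‖ = 1 := by
    simpa using Complex.norm_exp_ofReal_mul_I (-θ)
  calc r < (z * Complex.exp (-(θ : ℂ) * Complex.I)).re := h
    _ ≤ ‖z * Complex.exp (-(θ : ℂ) * Complex.I)‖ := Complex.re_le_norm _
    _ = ‖z‖ := by rw [norm_mul, hexp, mul_one]

/-- `Re Q′(z) > 0` for `|z| > (√(m+1)+√m)²`, hence `Q` is injective on every
half-plane `{Re(z e^{-iθ}) > (√(m+1)+√m)²}`. -/
theorem stmt_4 (m : ℕ) (hm : 2 ≤ m)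
    (Q : ℂ → ℂ)
    (hQ : ∀ z : ℂ, Q z = (1 + z) ^ (2 + 2 * m) / (z * (1 - z) ^ (2 * m))) :
    (∀ z : ℂ, (Real.sqrt ((m : ℝ) + 1) + Real.sqrt (m : ℝ)) ^ 2 < ‖z‖ →
      0 < (deriv Q z).re) ∧
    (∀ θ : ℝ, Set.InjOn Q
      {z : ℂ | (Real.sqrt ((m : ℝ) + 1) + Real.sqrt (m : ℝ)) ^ 2 <
        (z * Complex.exp (-(θ : ℂ) * Complex.I)).re}) := by
  obtain ⟨n, hn⟩ : ∃ n, 2 * m + 1 = n + 2 := ⟨2 * m - 1, by omega⟩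
  have hderiv : ∀ z : ℂ, (√((m : ℝ) + 1) + √(m : ℝ)) ^ 2 < ‖z‖ →
      DifferentiableAt ℂ Q z ∧ 0 < (deriv Q z).re := by
    intro z hz
    have hz1 : 1 < ‖z‖ := (one_le_sqrt_add_sqrt_sq m).trans_lt hz
    have hQz : HasDerivAt Q (qDerivInv (n + 2) z⁻¹) z := by
      rw [funext hQ, ← hn]
      exact hasDerivAt_Q m (norm_pos_iff.1 (one_pos.trans hz1)) (by rintro rfl; simp at hz1)
    refine ⟨hQz.differentiableAt, hQz.deriv ▸ re_qDerivInv_inv_pos n hz1 ?_⟩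
    rw [← hn]
    exact_mod_cast sq_sub_mul_add_one_pos_of_sqrt_add_sqrt_sq_lt m hz
  refine ⟨fun z hz => (hderiv z hz).2, fun θ => ?_⟩
  exact (convex_setOf_lt_re_mul _ _).injOn_of_re_deriv_pos
    (fun z hz => (hderiv z (lt_norm_of_lt_re_mul_exp hz)).1)
    (fun z hz => (hderiv z (lt_norm_of_lt_re_mul_exp hz)).2)
end

section
/- Fix the real constants e₁ = 0.84, e₀ = −0.18, e₋₁ = 0.6, and for r ≥ 1 set a_E(r) = e₁r + e₋₁/r, b_E(r) = e₁r − e₋₁/r, E_r = {x+iy ∈ ℂ : ((x−e₀)/a_E(r))² + (y/b_E(r))² ≤ 1}. Let m ≥ 2 be an integer, α = mπ/(2(m+1)), and let ε₃, ε₄ be real numbers with 2/3 ≤ ε₃ < 1 and 1 < ε₄ < 1/sin α. Then E_{1.4} is contained in the union D̄(cot(α)·i, 1/sin α) ∪ D̄(−cot(α)·i, 1/sin α) ∪ D̄(1, ε₃) ∪ D̄(−1, ε₄). Consequently, the complement of these four closed disks in ℂ is contained in ℂ∖E_{1.4}. -/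
/-!
Write `E_{1.4}` as the ellipse with centre `-0.18` and semi-axes `1404/875`, `654/875`. Cutting
it along the vertical lines `x = -2/5` and `x = 39/50`, the left piece lies in `D̄(-1, 1)`, the
right piece in `D̄(1, 2/3)` and the middle piece in the unit disk. The unit disk is covered by
`D̄(± i cot α, 1/sin α)`, since `1/sin² α = 1 + cot² α`: a point `z` of the unit disk is at
squared distance `|z|² ∓ 2 y cot α + cot² α ≤ 1 + cot² α` from one of the two centres.
-/

open Complex Metric

lemma Complex.mem_closedBall_iff_sq {z c : ℂ} {r : ℝ} (hr : 0 ≤ r) :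
    z ∈ closedBall c r ↔ (z.re - c.re) ^ 2 + (z.im - c.im) ^ 2 ≤ r ^ 2 := by
  rw [mem_closedBall, dist_eq_re_im, Real.sqrt_le_left hr]

lemma closedBall_zero_one_subset_union_closedBall_mul_I (c : ℝ) :
    closedBall (0 : ℂ) 1 ⊆
      closedBall ((c : ℂ) * I) √(1 + c ^ 2) ∪ closedBall (-((c : ℂ) * I)) √(1 + c ^ 2) := by
  intro z hz
  have hr := Real.sqrt_nonneg (1 + c ^ 2)
  have hsq := Real.sq_sqrt (by positivity : (0 : ℝ) ≤ 1 + c ^ 2)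
  rw [Complex.mem_closedBall_iff_sq zero_le_one] at hz
  simp only [zero_re, zero_im, sub_zero] at hz
  rcases le_total 0 (c * z.im) with hcy | hcy
  · left
    rw [Complex.mem_closedBall_iff_sq hr, hsq]
    simp only [mul_re, ofReal_re, I_re, ofReal_im, I_im, mul_im]
    nlinarith
  · right
    rw [Complex.mem_closedBall_iff_sq hr, hsq]
    simp only [neg_re, neg_im, mul_re, ofReal_re, I_re, ofReal_im, I_im, mul_im]
    nlinarith

lemma Real.one_div_sin_eq_sqrt_one_add_cot_sq {α : ℝ} (hα : 0 < Real.sin α) :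
    1 / Real.sin α = √(1 + Real.cot α ^ 2) := by
  rw [eq_comm, Real.sqrt_eq_iff_mul_self_eq_of_pos (by positivity), Real.cot_eq_cos_div_sin]
  field_simp
  linarith [Real.sin_sq_add_cos_sq α]

def ellipse (c a b : ℝ) : Set ℂ :=
  {z | ((z.re - c) / a) ^ 2 + (z.im / b) ^ 2 ≤ 1}

lemma ellipse_subset_union_closedBall :
    ellipse (-0.18) (1404 / 875) (654 / 875) ⊆
      closedBall (-1) 1 ∪ closedBall 0 1 ∪ closedBall 1 (2 / 3) := by
  intro z hz
  have hE : 654 ^ 2 * (z.re + 0.18) ^ 2 + 1404 ^ 2 * z.im ^ 2 ≤ (1404 * 654 / 875 : ℝ) ^ 2 := by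
    simp only [ellipse, Set.mem_ofPred_eq, div_pow] at hz
    rw [div_add_div _ _ (by norm_num) (by norm_num), div_le_one (by norm_num)] at hz
    linarith
  simp only [Set.mem_union, Complex.mem_closedBall_iff_sq zero_le_one,
    Complex.mem_closedBall_iff_sq (by norm_num : (0 : ℝ) ≤ 2 / 3)]
  simp only [neg_re, neg_im, one_re, one_im, zero_re, zero_im]
  -- The ellipse spans `-1.79 ≤ x ≤ 1.45`; on each strip, the disk inequality is the ellipse
  -- inequality plus a multiple of the product of the two constraints bounding the strip.
  rcases le_or_gt z.re (-2 / 5) with hl | hl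
  · have hx : -1.79 ≤ z.re := by nlinarith [sq_nonneg z.im]
    left; left
    nlinarith [mul_nonneg (by linarith : 0 ≤ z.re + 1.79) (by linarith : 0 ≤ -2 / 5 - z.re)]
  rcases le_or_gt (39 / 50) z.re with hr | hr
  · have hx : z.re ≤ 1.45 := by nlinarith [sq_nonneg z.im]
    right
    nlinarith [mul_nonneg (by linarith : 0 ≤ z.re - 39 / 50) (by linarith : 0 ≤ 1.45 - z.re)]
  · left; right
    nlinarith [mul_nonneg (by linarith : 0 ≤ z.re + 2 / 5) (by linarith : 0 ≤ 39 / 50 - z.re)]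

theorem stmt_9_general (m : ℕ) (hm : 2 ≤ m)
    (α : ℝ) (hα : α = (m : ℝ) * Real.pi / (2 * ((m : ℝ) + 1)))
    (ε3 ε4 : ℝ) (h3a : 2 / 3 ≤ ε3) (h4a : 1 < ε4)
    (aE bE : ℝ → ℝ)
    (haE : ∀ r : ℝ, aE r = 0.84 * r + 0.6 / r)
    (hbE : ∀ r : ℝ, bE r = 0.84 * r - 0.6 / r)
    (E : ℝ → Set ℂ)
    (hE : ∀ r : ℝ, E r =
      {z : ℂ | ((z.re - (-0.18)) / aE r) ^ 2 + (z.im / bE r) ^ 2 ≤ 1}) :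
    E 1.4 ⊆
      Metric.closedBall ((Real.cot α : ℂ) * Complex.I) (1 / Real.sin α) ∪
      Metric.closedBall (-((Real.cot α : ℂ) * Complex.I)) (1 / Real.sin α) ∪
      Metric.closedBall (1 : ℂ) ε3 ∪ Metric.closedBall (-1 : ℂ) ε4 ∧
    (Metric.closedBall ((Real.cot α : ℂ) * Complex.I) (1 / Real.sin α) ∪
      Metric.closedBall (-((Real.cot α : ℂ) * Complex.I)) (1 / Real.sin α) ∪
      Metric.closedBall (1 : ℂ) ε3 ∪ Metric.closedBall (-1 : ℂ) ε4)ᶜ ⊆ (E 1.4)ᶜ := by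
  have hm' : (2 : ℝ) ≤ m := by exact_mod_cast hm
  have hsin : 0 < Real.sin α := by
    refine Real.sin_pos_of_pos_of_lt_pi (by rw [hα]; positivity) ?_
    rw [hα, div_lt_iff₀ (by positivity)]
    nlinarith [Real.pi_pos]
  have hE14 : E 1.4 = ellipse (-0.18) (1404 / 875) (654 / 875) := by
    rw [hE, haE, hbE]; norm_num [ellipse]
  have hcot := closedBall_zero_one_subset_union_closedBall_mul_I (Real.cot α)
  rw [← Real.one_div_sin_eq_sqrt_one_add_cot_sq hsin] at hcot
  have hcover : E 1.4 ⊆ _ := hE14 ▸ (ellipse_subset_union_closedBall.trans <|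
    Set.union_subset (Set.union_subset
      (Set.subset_union_of_subset_right (closedBall_subset_closedBall h4a.le) _)
      (Set.subset_union_of_subset_left (Set.subset_union_of_subset_left hcot _) _))
      (Set.subset_union_of_subset_left
        (Set.subset_union_of_subset_right (closedBall_subset_closedBall h3a) _) _))
  exact ⟨hcover, Set.compl_subset_compl.mpr hcover⟩

/-- the ellipse `E_{1.4}` is covered by the four closed disks
`D̄(±i cot α, 1/sin α)`, `D̄(1, ε₃)`, `D̄(-1, ε₄)`; consequently the complement of the four
disks is contained in the complement of `E_{1.4}`. -/
theorem stmt_9 (m : ℕ) (hm : 2 ≤ m)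
    (α : ℝ) (hα : α = (m : ℝ) * Real.pi / (2 * ((m : ℝ) + 1)))
    (ε3 ε4 : ℝ) (h3a : 2 / 3 ≤ ε3) (h3b : ε3 < 1) (h4a : 1 < ε4) (h4b : ε4 < 1 / Real.sin α)
    (aE bE : ℝ → ℝ)
    (haE : ∀ r : ℝ, aE r = 0.84 * r + 0.6 / r)
    (hbE : ∀ r : ℝ, bE r = 0.84 * r - 0.6 / r)
    (E : ℝ → Set ℂ)
    (hE : ∀ r : ℝ, E r =
      {z : ℂ | ((z.re - (-0.18)) / aE r) ^ 2 + (z.im / bE r) ^ 2 ≤ 1}) :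
    E 1.4 ⊆
      Metric.closedBall ((Real.cot α : ℂ) * Complex.I) (1 / Real.sin α) ∪
      Metric.closedBall (-((Real.cot α : ℂ) * Complex.I)) (1 / Real.sin α) ∪
      Metric.closedBall (1 : ℂ) ε3 ∪ Metric.closedBall (-1 : ℂ) ε4 ∧
    (Metric.closedBall ((Real.cot α : ℂ) * Complex.I) (1 / Real.sin α) ∪
      Metric.closedBall (-((Real.cot α : ℂ) * Complex.I)) (1 / Real.sin α) ∪
      Metric.closedBall (1 : ℂ) ε3 ∪ Metric.closedBall (-1 : ℂ) ε4)ᶜ ⊆ (E 1.4)ᶜ :=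
  stmt_9_general m hm α hα ε3 ε4 h3a h4a aE bE haE hbE E hE
end

section
/- Let β ∈ (0, π/2) and let ψ₁(z) = −4z/(1+z)² (equivalently ψ₁ = ψ_{1,2}∘ψ_{1,1} with ψ_{1,1}(z) = (z−1)/(z+1) and ψ_{1,2}(w) = w² − 1). Then: (i) ψ_{1,1} maps the set D(cot(β)·i, 1/sin β) ∖ D̄(0,1) bijectively onto the open sector {w ∈ ℂ : w ≠ 0, β < arg w < π/2}; (ii) ψ₁ maps D(cot(β)·i, 1/sin β) ∖ D̄(0,1) bijectively onto {z ∈ ℂ : z ≠ −1, 2β < arg(z+1) < π}; and symmetrically ψ₁ maps D(−cot(β)·i, 1/sin β) ∖ D̄(0,1) onto {z ∈ ℂ : z ≠ −1, −π < arg(z+1) < −2β}. -/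
/-!
In coordinates, `Re ψ₁₁(z) = (|z|² - 1) / |z + 1|²` and `Im ψ₁₁(z) = 2 Im z / |z + 1|²`. So the two
inequalities cutting out the lune, `|z| > 1` and `|z - i cot β| < 1 / sin β` (i.e.
`sin β (|z|² - 1) < 2 cos β Im z`), say exactly `Re ψ₁₁(z) > 0` and
`sin β Re ψ₁₁(z) < cos β Im ψ₁₁(z)`, which cut out the sector `β < arg w < π/2`; as `ψ₁₁` is
invertible off `-1` with inverse `w ↦ (1 + w) / (1 - w)`, it is a bijection between the two. On
`-π/2 < arg w ≤ π/2` squaring doubles the argument and is inverted by the principal square root,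
which gives the claim for `ψ₁ = ψ₁₂ ∘ ψ₁₁`. Complex conjugation commutes with `ψ₁` and exchanges
the two lunes and the two target regions.
-/

open Complex Set Metric Function
open scoped Real ComplexConjugate

theorem Set.InvOn.bijOn_of_mem_iff {α β : Type*} {f : α → β} {g : β → α} {A s : Set α}
    {B t : Set β} (hfg : InvOn g f A B) (hg : MapsTo g B A) (hsA : s ⊆ A) (htB : t ⊆ B)
    (hst : ∀ x ∈ A, x ∈ s ↔ f x ∈ t) : BijOn f s t := by
  refine (hfg.mono hsA htB).bijOn (fun x hx => (hst x (hsA hx)).1 hx) fun y hy => ?_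
  refine (hst _ (hg (htB hy))).2 ?_
  rwa [hfg.2 (htB hy)]

theorem Function.Semiconj.bijOn_preimage {α β E : Type*} [EquivLike E α β] {e : E}
    {fa : α → α} {fb : β → β} (h : Semiconj e fa fb) {s t : Set β} (hb : BijOn fb s t) :
    BijOn fa (e ⁻¹' s) (e ⁻¹' t) := by
  have hfa : fa = (e : α ≃ β).symm ∘ fb ∘ e := by
    ext x
    simp [← h x]
  rw [hfa]
  exact (Equiv.bijOn_symm.2 ((e : α ≃ β).bijOn fun _ => Iff.rfl)).comp
    (hb.comp ((e : α ≃ β).bijOn fun _ => Iff.rfl))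

section Field

variable {K : Type*} [Field K]

theorem sub_one_div_add_one_sq_sub_one {z : K} (hz : z + 1 ≠ 0) :
    ((z - 1) / (z + 1)) ^ 2 - 1 = -4 * z / (1 + z) ^ 2 := by
  rw [add_comm 1 z]
  field_simp
  ring

theorem invOn_sub_one_div_add_one [NeZero (2 : K)] :
    InvOn (fun w : K => (1 + w) / (1 - w)) (fun z => (z - 1) / (z + 1))
      {z | z + 1 ≠ 0} {w | 1 - w ≠ 0} := by
  have h2 : (2 : K) ≠ 0 := two_ne_zero
  constructor
  · intro z (hz : z + 1 ≠ 0)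
    dsimp only
    rw [one_add_div hz, one_sub_div hz, div_div_div_cancel_right₀ hz,
      show z + 1 + (z - 1) = 2 * z by ring, show z + 1 - (z - 1) = 2 by ring,
      mul_div_cancel_left₀ z h2]
  · intro w (hw : 1 - w ≠ 0)
    dsimp only
    rw [div_sub_one hw, div_add_one hw, div_div_div_cancel_right₀ hw,
      show 1 + w - (1 - w) = 2 * w by ring, show 1 + w + (1 - w) = 2 by ring,
      mul_div_cancel_left₀ w h2]

theorem mapsTo_one_add_div_one_sub [NeZero (2 : K)] :
    MapsTo (fun w : K => (1 + w) / (1 - w)) {w | 1 - w ≠ 0} {z | z + 1 ≠ 0} := by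
  intro w (hw : 1 - w ≠ 0)
  rw [mem_ofPred_eq, div_add_one hw, add_add_sub_cancel, one_add_one_eq_two]
  exact div_ne_zero two_ne_zero hw

end Field

namespace Complex

theorem arg_cpow_inv_two (z : ℂ) : (z ^ (2⁻¹ : ℂ)).arg = z.arg / 2 := by
  rcases eq_or_ne z 0 with rfl | hz
  · simp
  have him : (log z * 2⁻¹).im = z.arg / 2 := by
    simp [log_im, div_eq_mul_inv]
  rw [cpow_def_of_ne_zero hz, arg_exp, him, toIocMod_eq_self]
  constructor <;> linarith [neg_pi_lt_arg z, arg_le_pi z, Real.pi_pos]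

theorem arg_sq {w : ℂ} (h₁ : -(π / 2) < w.arg) (h₂ : w.arg ≤ π / 2) :
    (w ^ 2).arg = 2 * w.arg := by
  have h := arg_cpow_inv_two (w ^ 2)
  rw [pow_cpow_ofNat_inv h₁ h₂] at h
  linarith

theorem bijOn_sq_setOf_arg {a b : ℝ} (ha : -(π / 2) ≤ a) (hb : b ≤ π / 2) :
    BijOn (· ^ 2) {w : ℂ | w ≠ 0 ∧ a < w.arg ∧ w.arg < b}
      {z : ℂ | z ≠ 0 ∧ 2 * a < z.arg ∧ z.arg < 2 * b} := by
  refine InvOn.bijOn (f' := (· ^ (2⁻¹ : ℂ))) ⟨fun w ⟨_, h₁, h₂⟩ => ?_, fun z _ => ?_⟩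
    (fun w ⟨hw, h₁, h₂⟩ => ?_) fun z ⟨hz, h₁, h₂⟩ => ?_
  · exact pow_cpow_ofNat_inv (by linarith) (by linarith)
  · exact cpow_ofNat_inv_pow z 2
  · rw [mem_ofPred_eq, arg_sq (by linarith) (by linarith)]
    exact ⟨pow_ne_zero 2 hw, by linarith, by linarith⟩
  · rw [mem_ofPred_eq, arg_cpow_inv_two]
    exact ⟨by simp [hz], by linarith, by linarith⟩

theorem re_sub_one_div_add_one (z : ℂ) :
    ((z - 1) / (z + 1)).re = (normSq z - 1) / normSq (z + 1) := by
  rw [div_re, ← add_div]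
  congr 1
  simp only [normSq_apply, sub_re, sub_im, add_re, add_im, one_re, one_im]
  ring

theorem im_sub_one_div_add_one (z : ℂ) :
    ((z - 1) / (z + 1)).im = 2 * z.im / normSq (z + 1) := by
  rw [div_im, div_sub_div_same]
  congr 1
  simp only [sub_re, sub_im, add_re, add_im, one_re, one_im]
  ring

end Complex

def lune (β : ℝ) : Set ℂ := ball ((Real.cot β : ℂ) * I) (1 / Real.sin β) \ closedBall 0 1

def sector (β : ℝ) : Set ℂ := {w | w ≠ 0 ∧ β < w.arg ∧ w.arg < π / 2}

theorem mem_lune_iff {β : ℝ} (hs : 0 < Real.sin β) {z : ℂ} :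
    z ∈ lune β ↔ 1 < normSq z ∧ Real.sin β * (normSq z - 1) < Real.cos β * (2 * z.im) := by
  have hcot : Real.sin β * Real.cot β = Real.cos β := by
    rw [Real.cot_eq_cos_div_sin, mul_div_cancel₀ _ hs.ne']
  have key : Real.sin β ^ 2 * normSq (z - Real.cot β * I) =
      1 - Real.sin β * (Real.cos β * (2 * z.im) - Real.sin β * (normSq z - 1)) := by
    simp only [normSq_apply, sub_re, sub_im, mul_re, mul_im, ofReal_re, ofReal_im, I_re, I_im]
    linear_combination (-2 * Real.sin β * z.im + Real.sin β * Real.cot β + Real.cos β) * hcot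
      + Real.sin_sq_add_cos_sq β
  rw [lune, mem_sdiff, mem_ball, mem_closedBall, dist_zero_right, not_le, dist_eq,
    lt_div_iff₀' hs, ← sq_lt_one_iff₀ (by positivity), ← one_lt_sq_iff₀ (norm_nonneg z), mul_pow,
    Complex.sq_norm, Complex.sq_norm, key, sub_lt_self_iff, mul_pos_iff_of_pos_left hs, sub_pos,
    and_comm]

theorem mem_sector_iff {β : ℝ} (hβ₁ : -(π / 2) < β) (hβ₂ : β < π / 2) {w : ℂ} :
    w ∈ sector β ↔ 0 < w.re ∧ Real.sin β * w.re < Real.cos β * w.im := by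
  have hcos : 0 < Real.cos β := Real.cos_pos_of_mem_Ioo ⟨hβ₁, hβ₂⟩
  have lt_arg_iff (hre : 0 < w.re) : β < w.arg ↔ Real.sin β * w.re < Real.cos β * w.im := by
    have harg := abs_lt.1 (abs_arg_lt_pi_div_two_iff.2 (Or.inl hre))
    rw [← Real.strictMonoOn_tan.lt_iff_lt ⟨hβ₁, hβ₂⟩ harg, tan_arg, Real.tan_eq_sin_div_cos,
      div_lt_div_iff₀ hcos hre, mul_comm w.im]
  constructor
  · rintro ⟨hw, h₁, h₂⟩
    have hre : 0 < w.re :=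
      (abs_arg_lt_pi_div_two_iff.1 (abs_lt.2 ⟨by linarith, h₂⟩)).resolve_right hw
    exact ⟨hre, (lt_arg_iff hre).1 h₁⟩
  · rintro ⟨hre, h⟩
    exact ⟨fun h0 => by simp [h0] at hre, (lt_arg_iff hre).2 h,
      arg_lt_pi_div_two_iff.2 (Or.inl hre)⟩

theorem lune_subset {β : ℝ} : lune β ⊆ {z | z + 1 ≠ 0} :=
  fun z hz h => hz.2 (by simp [eq_neg_of_add_eq_zero_left h])

theorem mem_lune_iff_sub_one_div_add_one_mem_sector {β : ℝ} (hβ₀ : 0 < β) (hβ₁ : β < π / 2)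
    {z : ℂ} (hz : z + 1 ≠ 0) : z ∈ lune β ↔ (z - 1) / (z + 1) ∈ sector β := by
  have hd : 0 < normSq (z + 1) := normSq_pos.2 hz
  rw [mem_lune_iff (Real.sin_pos_of_pos_of_lt_pi hβ₀ (by linarith [Real.pi_pos])),
    mem_sector_iff (by linarith) hβ₁, re_sub_one_div_add_one, im_sub_one_div_add_one,
    div_pos_iff_of_pos_right hd, sub_pos, mul_div_assoc', mul_div_assoc',
    div_lt_div_iff_of_pos_right hd]

theorem bijOn_sub_one_div_add_one_lune {β : ℝ} (hβ₀ : 0 < β) (hβ₁ : β < π / 2) :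
    BijOn (fun z : ℂ => (z - 1) / (z + 1)) (lune β) (sector β) := by
  refine invOn_sub_one_div_add_one.bijOn_of_mem_iff mapsTo_one_add_div_one_sub
    lune_subset (fun w hw h => ?_) fun z hz =>
      mem_lune_iff_sub_one_div_add_one_mem_sector hβ₀ hβ₁ hz
  have : arg w = 0 := by rw [← sub_eq_zero.1 h, arg_one]
  linarith [hw.2.1]

theorem bijOn_sq_sub_one_sector {β : ℝ} (hβ : -(π / 2) ≤ β) :
    BijOn (fun w : ℂ => w ^ 2 - 1) (sector β)
      {z : ℂ | z ≠ -1 ∧ 2 * β < (z + 1).arg ∧ (z + 1).arg < π} := by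
  have hsub : BijOn (Equiv.subRight (1 : ℂ))
      {z : ℂ | z ≠ 0 ∧ 2 * β < z.arg ∧ z.arg < 2 * (π / 2)}
      {z : ℂ | z ≠ -1 ∧ 2 * β < (z + 1).arg ∧ (z + 1).arg < π} :=
    Equiv.bijOn _ fun z => by simp [mul_div_cancel₀]
  exact hsub.comp (bijOn_sq_setOf_arg hβ le_rfl)

theorem bijOn_neg_four_mul_div_one_add_sq_lune {β : ℝ} (hβ₀ : 0 < β) (hβ₁ : β < π / 2) :
    BijOn (fun z : ℂ => -4 * z / (1 + z) ^ 2) (lune β)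
      {z : ℂ | z ≠ -1 ∧ 2 * β < (z + 1).arg ∧ (z + 1).arg < π} :=
  ((bijOn_sq_sub_one_sector (by linarith)).comp
    (bijOn_sub_one_div_add_one_lune hβ₀ hβ₁)).congr fun _ hz =>
      sub_one_div_add_one_sq_sub_one (lune_subset hz)

theorem semiconj_conj_neg_four_mul_div_one_add_sq :
    Semiconj conjLIE (fun z : ℂ => -4 * z / (1 + z) ^ 2) (fun z : ℂ => -4 * z / (1 + z) ^ 2) :=
  fun z => by
    simp only [conjLIE_apply, map_div₀, map_mul, map_neg, map_pow, map_add, map_one, map_ofNat]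

theorem preimage_conj_lune (β : ℝ) :
    conjLIE ⁻¹' lune β =
      ball (-((Real.cot β : ℂ) * I)) (1 / Real.sin β) \ closedBall 0 1 := by
  rw [lune, preimage_sdiff, LinearIsometryEquiv.preimage_ball,
    LinearIsometryEquiv.preimage_closedBall, conjLIE_symm, conjLIE_apply, conjLIE_apply, map_zero,
    map_mul, conj_ofReal, conj_I, mul_neg]

theorem preimage_conj_setOf_arg_add_one {a : ℝ} (ha : -π ≤ a) :
    conjLIE ⁻¹' {z : ℂ | z ≠ -1 ∧ a < (z + 1).arg ∧ (z + 1).arg < π} =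
      {z : ℂ | z ≠ -1 ∧ -π < (z + 1).arg ∧ (z + 1).arg < -a} := by
  ext z
  have hconj : conj z + 1 = conj (z + 1) := by rw [map_add, map_one]
  have hne : conj z = -1 ↔ z = -1 := (RingHom.injective _).eq_iff' (by simp)
  simp only [mem_preimage, mem_ofPred_eq, conjLIE_apply, ne_eq, hne, hconj, arg_conj]
  split_ifs with h
  · simp only [lt_irrefl, and_false, false_iff, h, not_and, not_lt]
    exact fun _ _ => by linarith
  · constructor <;> rintro ⟨hz, h₁, h₂⟩ <;> exact ⟨hz, by linarith, by linarith⟩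

/-- mapping properties of `ψ₁(z) = -4z/(1+z)²` (and of the Möbius factor
`ψ₁₁(z) = (z-1)/(z+1)`) on the lune `D(i cot β, 1/sin β) ∖ D̄(0,1)` and its mirror image. -/
theorem stmt_10 (β : ℝ) (hβ1 : 0 < β) (hβ2 : β < Real.pi / 2)
    (ψ1 ψ11 ψ12 : ℂ → ℂ)
    (hψ1 : ∀ z : ℂ, ψ1 z = -4 * z / (1 + z) ^ 2)
    (hψ11 : ∀ z : ℂ, ψ11 z = (z - 1) / (z + 1))
    (hψ12 : ∀ w : ℂ, ψ12 w = w ^ 2 - 1) :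
    (∀ z : ℂ, z ≠ -1 → ψ1 z = ψ12 (ψ11 z)) ∧
    Set.BijOn ψ11
      (Metric.ball ((Real.cot β : ℂ) * Complex.I) (1 / Real.sin β) \ Metric.closedBall 0 1)
      {w : ℂ | w ≠ 0 ∧ β < w.arg ∧ w.arg < Real.pi / 2} ∧
    Set.BijOn ψ1
      (Metric.ball ((Real.cot β : ℂ) * Complex.I) (1 / Real.sin β) \ Metric.closedBall 0 1)
      {z : ℂ | z ≠ -1 ∧ 2 * β < (z + 1).arg ∧ (z + 1).arg < Real.pi} ∧
    Set.BijOn ψ1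
      (Metric.ball (-((Real.cot β : ℂ) * Complex.I)) (1 / Real.sin β) \ Metric.closedBall 0 1)
      {z : ℂ | z ≠ -1 ∧ -Real.pi < (z + 1).arg ∧ (z + 1).arg < -(2 * β)} := by
  obtain rfl : ψ1 = fun z => -4 * z / (1 + z) ^ 2 := funext hψ1
  obtain rfl : ψ11 = fun z => (z - 1) / (z + 1) := funext hψ11
  obtain rfl : ψ12 = fun w => w ^ 2 - 1 := funext hψ12
  have hψ1_bij := bijOn_neg_four_mul_div_one_add_sq_lune hβ1 hβ2
  refine ⟨fun z hz => (sub_one_div_add_one_sq_sub_one (mt add_eq_zero_iff_eq_neg.1 hz)).symm,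
    bijOn_sub_one_div_add_one_lune hβ1 hβ2, hψ1_bij, ?_⟩
  rw [← preimage_conj_lune, ← preimage_conj_setOf_arg_add_one (by linarith [Real.pi_pos])]
  exact semiconj_conj_neg_four_mul_div_one_add_sq.bijOn_preimage hψ1_bij
end
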